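/- For the simple quotient module V = A₀ / F·v_{0,0} of the S(l₁,l₂,l₃;0,Γ)-module A₀, the set of generalized weights of V is Γ, the weight space V_0^{(0)} has dimension l₁+l₂ (spanned by the images of v_{0,1_[p]} for p ∈ {1,…,l₁+l₂}), and dim V_β^{(0)} = 1 for every β ∈ Γ∖{0}. -/

import Mathlib

open scoped BigOperators

namespace SDF

variable (F : Type) [Field F] [IsAlgClosed F] [CharZero F]
variable (l₁ l₂ l₃ : ℕ) (Γ : AddSubgroup (Fin (l₂ + l₃) → F))

/-- The semigroup algebra `A(l₁,l₂,l₃;Γ) = F[Γ × ℕ^{l₁+l₂}]`,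
with basis `x^α t^i` for `α ∈ Γ`, `i ∈ ℕ^{l₁+l₂}`. -/
abbrev Alg : Type := AddMonoidAlgebra F (↥Γ × (Fin (l₁ + l₂) →₀ ℕ))

/-- The basis monomial `x^α t^i`. -/
noncomputable def mono (α : Γ) (i : Fin (l₁ + l₂) →₀ ℕ) : Alg F l₁ l₂ l₃ Γ :=
  AddMonoidAlgebra.single (α, i) 1

/-- The `p`-th coordinate of `α ∈ Γ ⊆ F^{l₂+l₃}`, with the convention `α_p = 0` for `p ≤ l₁`. -/
def acoord (p : Fin (l₁ + l₂ + l₃)) (α : Γ) : F :=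
  if h : l₁ ≤ (p : ℕ) then (α : Fin (l₂ + l₃) → F) ⟨(p : ℕ) - l₁, by have := p.isLt; omega⟩
  else 0

/-- The `p`-th coordinate of a general `μ ∈ F^{l₂+l₃}`, with the convention `μ_p = 0` for `p ≤ l₁`. -/
def fcoord (p : Fin (l₁ + l₂ + l₃)) (μ : Fin (l₂ + l₃) → F) : F :=
  if h : l₁ ≤ (p : ℕ) then μ ⟨(p : ℕ) - l₁, by have := p.isLt; omega⟩ else 0

/-- The `p`-th component of `i ∈ ℕ^{l₁+l₂}`, with the convention `i_p = 0` for `p > l₁+l₂`. -/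
def icoord (p : Fin (l₁ + l₂ + l₃)) (i : Fin (l₁ + l₂) →₀ ℕ) : ℕ :=
  if h : (p : ℕ) < l₁ + l₂ then i ⟨(p : ℕ), h⟩ else 0

/-- `i - 1_[p]` (truncated subtraction; only used with coefficient `i_p`). -/
noncomputable def lower (p : Fin (l₁ + l₂ + l₃)) (i : Fin (l₁ + l₂) →₀ ℕ) : Fin (l₁ + l₂) →₀ ℕ :=
  if h : (p : ℕ) < l₁ + l₂ then i - Finsupp.single ⟨(p : ℕ), h⟩ 1 else i

/-- The derivation `∂_p` of `A(l₁,l₂,l₃;Γ)`: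
`∂_p(x^α t^i) = α_p x^α t^i + i_p x^α t^{i - 1_[p]}`. -/
noncomputable def pd (p : Fin (l₁ + l₂ + l₃)) :
    Alg F l₁ l₂ l₃ Γ →ₗ[F] Alg F l₁ l₂ l₃ Γ :=
  (Finsupp.lsum F fun g : ↥Γ × (Fin (l₁ + l₂) →₀ ℕ) =>
    LinearMap.toSpanSingleton F (Alg F l₁ l₂ l₃ Γ)
      (acoord F l₁ l₂ l₃ Γ p g.1 • mono F l₁ l₂ l₃ Γ g.1 g.2
        + (icoord l₁ l₂ l₃ p g.2 : F) • mono F l₁ l₂ l₃ Γ g.1 (lower l₁ l₂ l₃ p g.2)))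
      ∘ₗ (AddMonoidAlgebra.coeffLinearEquiv F).toLinearMap

/-- The Witt algebra `W(l₁,l₂,l₃;Γ) = A·D`; the tuple `u : Wt` represents `Σ_p u_p ∂_p`. -/
abbrev Wt : Type := Fin (l₁ + l₂ + l₃) → Alg F l₁ l₂ l₃ Γ

/-- The Lie bracket of `W(l₁,l₂,l₃;Γ)`:
`[Σ_p u_p ∂_p, Σ_q v_q ∂_q] = Σ_{p,q} (u_p ∂_p(v_q) - v_p ∂_p(u_q)) ∂_q`. -/
noncomputable def wbr (u v : Wt F l₁ l₂ l₃ Γ) : Wt F l₁ l₂ l₃ Γ :=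
  fun r => ∑ p, (u p * pd F l₁ l₂ l₃ Γ p (v r) - v p * pd F l₁ l₂ l₃ Γ p (u r))

/-- `D_{p,q}(u) = ∂_p(u) ∂_q - ∂_q(u) ∂_p`. -/
noncomputable def Dpq (p q : Fin (l₁ + l₂ + l₃)) (u : Alg F l₁ l₂ l₃ Γ) :
    Wt F l₁ l₂ l₃ Γ :=
  Pi.single q (pd F l₁ l₂ l₃ Γ p u) - Pi.single p (pd F l₁ l₂ l₃ Γ q u)

/-- The divergence-free algebra `S(l₁,l₂,l₃;0,Γ) = Span{D_{p,q}(u)}`. -/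
noncomputable def Ssub : Submodule F (Wt F l₁ l₂ l₃ Γ) :=
  Submodule.span F {w | ∃ p q u, w = Dpq F l₁ l₂ l₃ Γ p q u}

/-- `Γ` is nondegenerate: it contains an `F`-basis of `F^{l₂+l₃}`, i.e. it spans. -/
def Nondeg : Prop := Submodule.span F (Γ : Set (Fin (l₂ + l₃) → F)) = ⊤

/-- The divergence `div(Σ_p u_p ∂_p) = Σ_p ∂_p(u_p)`. -/
noncomputable def dvg (w : Wt F l₁ l₂ l₃ Γ) : Alg F l₁ l₂ l₃ Γ :=
  ∑ p, pd F l₁ l₂ l₃ Γ p (w p)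

/-- The action of `Σ_p u_p ∂_p ∈ W` on `A_μ` (the space `A` with basis `v_{β,i}` the monomials):
`(u ∂_p) . v = u * (∂_p + μ_p) v`. On basis elements this gives exactly the defining formulas
of the module `A_μ`. -/
noncomputable def actW (μ : Fin (l₂ + l₃) → F) (X : Wt F l₁ l₂ l₃ Γ) :
    Alg F l₁ l₂ l₃ Γ →ₗ[F] Alg F l₁ l₂ l₃ Γ :=
  ∑ p, (LinearMap.mulLeft F (X p)).comp
    (pd F l₁ l₂ l₃ Γ p + fcoord F l₁ l₂ l₃ p μ • LinearMap.id)

/-- The element `Σ_p a_p ∂_p` of `D ⊆ W`. -/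
noncomputable def wD (a : Fin (l₁ + l₂ + l₃) → F) : Wt F l₁ l₂ l₃ Γ :=
  fun p => algebraMap F (Alg F l₁ l₂ l₃ Γ) (a p)

/-- The element `∂_p ∈ W`. -/
noncomputable def wdelta (p : Fin (l₁ + l₂ + l₃)) : Wt F l₁ l₂ l₃ Γ :=
  Pi.single p 1

/-- `β(∂) = Σ_{p>l₁} a_p β_p` for `∂ = Σ_p a_p ∂_p`. -/
def beval (β : Fin (l₂ + l₃) → F) (a : Fin (l₁ + l₂ + l₃) → F) : F :=
  ∑ p, a p * fcoord F l₁ l₂ l₃ p β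


/-- The line `F·v_{0,0}` in `A₀`, a trivial submodule. -/
noncomputable def L0 : Submodule F (Alg F l₁ l₂ l₃ Γ) :=
  Submodule.span F {mono F l₁ l₂ l₃ Γ 0 0}

end SDF

/-!
Split `u ∈ A₀` into slices `x^α · F[t]`. On the coefficients of top `t`-degree in a slice, `∂_p`
acts as multiplication by `α_p`, because its lowering part `i_p x^α t^{i-1_[p]}` only reaches
lower degrees. So if `u ∉ F·1` and every `∂_p - β_p` is nilpotent on `u` modulo `F·1`, a top
coefficient of `u` away from `1` forces `β = α ∈ Γ`. For a weight vector of weight `β ∈ Γ`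
modulo `F·1` the same argument confines `u` to the slice `x^β`, and then the coefficient
`(j_p + 1) u_{β, j + 1_[p]}` of `x^β t^j` in `(∂_p - β_p) u` has to vanish unless `x^β t^j = 1`.
Hence such `u` is a combination of `1` and `x^β` for `β ≠ 0`, and of `1, t_1, …, t_{l₁+l₂}` for
`β = 0`; the images of monomials other than `1` are linearly independent in `A₀ / F·1`.
-/

theorem Submodule.mapQ_sub_smul_pow_mkQ {R M : Type*} [CommRing R] [AddCommGroup M] [Module R M]
    (N : Submodule R M) (f : Module.End R M) (h : N ≤ N.comap f) (c : R) (n : ℕ) (x : M) :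
    ((N.mapQ N f h - c • 1) ^ n) (N.mkQ x) = N.mkQ (((f - c • 1) ^ n) x) := by
  induction n generalizing x with
  | zero => rfl
  | succ n ih =>
    rw [pow_succ, Module.End.mul_apply, pow_succ, Module.End.mul_apply, ← ih]
    rfl

theorem Finsupp.ite_tsub_single_eq {σ : Type*} [DecidableEq σ] (i j : σ →₀ ℕ) (P : σ) :
    (if i - single P 1 = j then i P else 0) = if i = j + single P 1 then j P + 1 else 0 := by
  by_cases h : i = j + single P 1
  · subst h
    simp
  · rw [if_neg h, ite_eq_right_iff]
    intro hj
    by_contra hP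
    exact h (by rw [← hj, tsub_add_cancel_of_le (single_le_iff.2 (Nat.one_le_iff_ne_zero.2 hP))])

namespace SDF

variable {F : Type} [Field F] {l₁ l₂ l₃ : ℕ} {Γ : AddSubgroup (Fin (l₂ + l₃) → F)}

@[simp]
theorem icoord_castAdd (P : Fin (l₁ + l₂)) (i : Fin (l₁ + l₂) →₀ ℕ) :
    icoord l₁ l₂ l₃ (Fin.castAdd l₃ P) i = i P := dif_pos P.isLt

@[simp]
theorem lower_castAdd (P : Fin (l₁ + l₂)) (i : Fin (l₁ + l₂) →₀ ℕ) :
    lower l₁ l₂ l₃ (Fin.castAdd l₃ P) i = i - Finsupp.single P 1 := dif_pos P.isLt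

@[simp]
theorem icoord_natAdd (q : Fin l₃) (i : Fin (l₁ + l₂) →₀ ℕ) :
    icoord l₁ l₂ l₃ (Fin.natAdd (l₁ + l₂) q) i = 0 := dif_neg (by simp)

@[simp]
theorem lower_natAdd (q : Fin l₃) (i : Fin (l₁ + l₂) →₀ ℕ) :
    lower l₁ l₂ l₃ (Fin.natAdd (l₁ + l₂) q) i = i := dif_neg (by simp)

@[simp]
theorem icoord_zero (p : Fin (l₁ + l₂ + l₃)) : icoord l₁ l₂ l₃ p 0 = 0 := by
  unfold icoord; split <;> rfl

@[simp]
theorem acoord_zero (p : Fin (l₁ + l₂ + l₃)) : acoord F l₁ l₂ l₃ Γ p 0 = 0 := by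
  unfold acoord; split <;> rfl

@[simp]
theorem fcoord_zero (p : Fin (l₁ + l₂ + l₃)) : fcoord F l₁ l₂ l₃ p 0 = 0 := by
  unfold fcoord; split <;> rfl

theorem acoord_eq_fcoord (p : Fin (l₁ + l₂ + l₃)) (α : Γ) :
    acoord F l₁ l₂ l₃ Γ p α = fcoord F l₁ l₂ l₃ p α := rfl

theorem eq_of_forall_fcoord_eq {μ ν : Fin (l₂ + l₃) → F}
    (h : ∀ p, fcoord F l₁ l₂ l₃ p μ = fcoord F l₁ l₂ l₃ p ν) : μ = ν := by
  funext k
  simpa [fcoord, Fin.ext_iff] using h ⟨l₁ + k, by omega⟩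

theorem pd_single (p : Fin (l₁ + l₂ + l₃)) (α : Γ) (i : Fin (l₁ + l₂) →₀ ℕ) (c : F) :
    pd F l₁ l₂ l₃ Γ p (AddMonoidAlgebra.single (α, i) c) =
      c • (acoord F l₁ l₂ l₃ Γ p α • mono F l₁ l₂ l₃ Γ α i +
        (icoord l₁ l₂ l₃ p i : F) • mono F l₁ l₂ l₃ Γ α (lower l₁ l₂ l₃ p i)) := by
  simp [pd]

theorem coeff_pd_castAdd (P : Fin (l₁ + l₂)) (u : Alg F l₁ l₂ l₃ Γ) (α : Γ)
    (j : Fin (l₁ + l₂) →₀ ℕ) :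
    (pd F l₁ l₂ l₃ Γ (Fin.castAdd l₃ P) u).coeff (α, j) =
      acoord F l₁ l₂ l₃ Γ (Fin.castAdd l₃ P) α * u.coeff (α, j) +
        ((j P + 1 : ℕ) : F) * u.coeff (α, j + Finsupp.single P 1) := by
  classical
  induction u using AddMonoidAlgebra.induction_linear with
  | zero => simp
  | add u v hu hv =>
    simp only [map_add, AddMonoidAlgebra.coeff_add, Finsupp.add_apply, hu, hv]
    ring
  | single g c =>
    obtain ⟨β, i⟩ := g
    have key := congrArg (fun n : ℕ => (n : F)) (Finsupp.ite_tsub_single_eq i j P)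
    simp only [Nat.cast_ite, Nat.cast_zero] at key
    simp only [pd_single, mono, icoord_castAdd, lower_castAdd, AddMonoidAlgebra.coeff_smul,
      AddMonoidAlgebra.coeff_add, AddMonoidAlgebra.coeff_single, Finsupp.smul_apply,
      Finsupp.add_apply, Finsupp.single_apply, Prod.mk.injEq, smul_eq_mul]
    by_cases hβ : β = α
    · subst hβ
      simp only [true_and, mul_ite, mul_one, mul_zero] at key ⊢
      rw [key]
      split_ifs <;> ring
    · simp [hβ]

theorem coeff_pd_natAdd (q : Fin l₃) (u : Alg F l₁ l₂ l₃ Γ) (α : Γ) (j : Fin (l₁ + l₂) →₀ ℕ) :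
    (pd F l₁ l₂ l₃ Γ (Fin.natAdd (l₁ + l₂) q) u).coeff (α, j) =
      acoord F l₁ l₂ l₃ Γ (Fin.natAdd (l₁ + l₂) q) α * u.coeff (α, j) := by
  classical
  induction u using AddMonoidAlgebra.induction_linear with
  | zero => simp
  | add u v hu hv =>
    simp only [map_add, AddMonoidAlgebra.coeff_add, Finsupp.add_apply, hu, hv]
    ring
  | single g c =>
    obtain ⟨β, i⟩ := g
    simp only [pd_single, mono, icoord_natAdd, lower_natAdd, AddMonoidAlgebra.coeff_smul,
      AddMonoidAlgebra.coeff_add, AddMonoidAlgebra.coeff_single, Finsupp.smul_apply,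
      Finsupp.add_apply, Finsupp.single_apply, Prod.mk.injEq, smul_eq_mul]
    split_ifs with h
    · obtain ⟨rfl, rfl⟩ := h
      ring
    · simp

theorem coeff_pd_of_forall_coeff_add_single_eq_zero (p : Fin (l₁ + l₂ + l₃))
    {u : Alg F l₁ l₂ l₃ Γ} {α : Γ} {j : Fin (l₁ + l₂) →₀ ℕ}
    (hu : ∀ P, u.coeff (α, j + Finsupp.single P 1) = 0) :
    (pd F l₁ l₂ l₃ Γ p u).coeff (α, j) = acoord F l₁ l₂ l₃ Γ p α * u.coeff (α, j) := by
  induction p using Fin.addCases with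
  | left P => rw [coeff_pd_castAdd, hu, mul_zero, add_zero]
  | right q => exact coeff_pd_natAdd q u α j

theorem coeff_pd_sub_smul_pow_of_degree_le (p : Fin (l₁ + l₂ + l₃)) (c : F) (n : ℕ)
    {u : Alg F l₁ l₂ l₃ Γ} {α : Γ} {d : ℕ}
    (hu : ∀ j : Fin (l₁ + l₂) →₀ ℕ, d < j.degree → u.coeff (α, j) = 0)
    {j : Fin (l₁ + l₂) →₀ ℕ} (hj : d ≤ j.degree) :
    (((pd F l₁ l₂ l₃ Γ p - c • 1) ^ n) u).coeff (α, j) =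
      (acoord F l₁ l₂ l₃ Γ p α - c) ^ n * u.coeff (α, j) := by
  induction n generalizing j with
  | zero => simp
  | succ n ih =>
    have hvanish : ∀ P, (((pd F l₁ l₂ l₃ Γ p - c • 1) ^ n) u).coeff
        (α, j + Finsupp.single P 1) = 0 := fun P => by
      have hdeg : d < (j + Finsupp.single P 1).degree := by simp; omega
      rw [ih hdeg.le, hu _ hdeg, mul_zero]
    rw [pow_succ', Module.End.mul_apply, LinearMap.sub_apply, AddMonoidAlgebra.coeff_sub,
      Finsupp.sub_apply, coeff_pd_of_forall_coeff_add_single_eq_zero p hvanish,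
      LinearMap.smul_apply, Module.End.one_apply, AddMonoidAlgebra.coeff_smul, Finsupp.smul_apply,
      ih hj, smul_eq_mul]
    ring

theorem exists_top_degree_coeff_ne_zero {u : Alg F l₁ l₂ l₃ Γ} {α : Γ}
    {i : Fin (l₁ + l₂) →₀ ℕ} (hi : (α, i) ≠ 0) (hu : u.coeff (α, i) ≠ 0) :
    ∃ i', u.coeff (α, i') ≠ 0 ∧ (α, i') ≠ 0 ∧
      ∀ j : Fin (l₁ + l₂) →₀ ℕ, i'.degree < j.degree → u.coeff (α, j) = 0 := by
  classical
  let s := u.coeff.support.preimage (α, ·) (fun _ _ _ _ h => (Prod.mk.inj h).2)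
  have hs : ∀ j, j ∈ s ↔ u.coeff (α, j) ≠ 0 :=
    fun _ => Finset.mem_preimage.trans Finsupp.mem_support_iff
  obtain ⟨i', hi's, hmax⟩ := s.exists_max_image Finsupp.degree ⟨i, (hs i).2 hu⟩
  refine ⟨i', (hs i').1 hi's, fun h0 => hi ?_, fun j hj => ?_⟩
  · obtain ⟨rfl, rfl⟩ := Prod.mk_eq_zero.1 h0
    have := hmax i ((hs i).2 hu)
    rw [map_zero, Nat.le_zero, Finsupp.degree_eq_zero_iff] at this
    simp [this]
  · by_contra hne
    exact absurd (hmax j ((hs j).2 hne)) (not_le.2 hj)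

theorem L0_eq_supported : L0 F l₁ l₂ l₃ Γ = AddMonoidAlgebra.supported F F {0} := by
  rw [AddMonoidAlgebra.supported_eq_span_single, Set.image_singleton]
  rfl

theorem mem_L0_iff {u : Alg F l₁ l₂ l₃ Γ} : u ∈ L0 F l₁ l₂ l₃ Γ ↔ ∀ g ≠ 0, u.coeff g = 0 := by
  rw [L0_eq_supported, AddMonoidAlgebra.mem_supported']
  rfl

theorem mem_of_forall_pd_sub_smul_pow_mem_L0 {β : Fin (l₂ + l₃) → F} {u : Alg F l₁ l₂ l₃ Γ}
    (hu : u ∉ L0 F l₁ l₂ l₃ Γ)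
    (h : ∀ p, ∃ n, ((pd F l₁ l₂ l₃ Γ p - fcoord F l₁ l₂ l₃ p β • 1 :
      Module.End F (Alg F l₁ l₂ l₃ Γ)) ^ n) u ∈ L0 F l₁ l₂ l₃ Γ) :
    β ∈ Γ := by
  obtain ⟨⟨α, i⟩, hg, hne⟩ : ∃ g ≠ 0, u.coeff g ≠ 0 := by
    simpa only [mem_L0_iff, not_forall, exists_prop] using hu
  obtain ⟨i', hne', hg', htop⟩ := exists_top_degree_coeff_ne_zero hg hne
  suffices (α : Fin (l₂ + l₃) → F) = β from this ▸ α.2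
  refine eq_of_forall_fcoord_eq (l₁ := l₁) fun p => ?_
  obtain ⟨n, hn⟩ := h p
  have hcoeff := mem_L0_iff.1 hn _ hg'
  rw [coeff_pd_sub_smul_pow_of_degree_le p _ n htop le_rfl, acoord_eq_fcoord] at hcoeff
  exact sub_eq_zero.1 (eq_zero_of_pow_eq_zero ((mul_eq_zero.1 hcoeff).resolve_right hne'))

theorem support_of_forall_pd_sub_smul_mem_L0 [CharZero F] {β : Γ} {u : Alg F l₁ l₂ l₃ Γ}
    (hu : ∀ p, pd F l₁ l₂ l₃ Γ p u - acoord F l₁ l₂ l₃ Γ p β • u ∈ L0 F l₁ l₂ l₃ Γ)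
    {α : Γ} {i : Fin (l₁ + l₂) →₀ ℕ} (hg : (α, i) ≠ 0) (hne : u.coeff (α, i) ≠ 0) :
    α = β ∧ (i = 0 ∨ β = 0 ∧ ∃ P, i = Finsupp.single P 1) := by
  have hαβ : α = β := by
    obtain ⟨i', hne', hg', htop⟩ := exists_top_degree_coeff_ne_zero hg hne
    refine Subtype.ext (eq_of_forall_fcoord_eq (l₁ := l₁) fun p => ?_)
    have hcoeff := mem_L0_iff.1 (hu p) _ hg'
    have htopcoeff : (pd F l₁ l₂ l₃ Γ p u - acoord F l₁ l₂ l₃ Γ p β • u).coeff (α, i') =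
        (acoord F l₁ l₂ l₃ Γ p α - acoord F l₁ l₂ l₃ Γ p β) ^ 1 * u.coeff (α, i') :=
      coeff_pd_sub_smul_pow_of_degree_le p _ 1 htop le_rfl
    rw [htopcoeff, pow_one] at hcoeff
    exact sub_eq_zero.1 ((mul_eq_zero.1 hcoeff).resolve_right hne')
  subst hαβ
  refine ⟨rfl, or_iff_not_imp_left.2 fun hi => ?_⟩
  obtain ⟨P, hP⟩ := Finsupp.ne_iff.1 hi
  set j := i - Finsupp.single P 1
  have hij : j + Finsupp.single P 1 = i :=
    tsub_add_cancel_of_le (Finsupp.single_le_iff.2 (Nat.one_le_iff_ne_zero.2 hP))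
  by_cases hj : (α, j) = 0
  · obtain ⟨rfl, hj0⟩ := Prod.mk_eq_zero.1 hj
    exact ⟨rfl, P, by rw [← hij, hj0, zero_add]⟩
  · have hcoeff := mem_L0_iff.1 (hu (Fin.castAdd l₃ P)) _ hj
    rw [AddMonoidAlgebra.coeff_sub, Finsupp.sub_apply, coeff_pd_castAdd, hij,
      AddMonoidAlgebra.coeff_smul, Finsupp.smul_apply, smul_eq_mul, add_sub_cancel_left] at hcoeff
    exact absurd ((mul_eq_zero.1 hcoeff).resolve_left (Nat.cast_ne_zero.2 (j P).succ_ne_zero)) hne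

theorem actW_zero_wdelta (p : Fin (l₁ + l₂ + l₃)) :
    actW F l₁ l₂ l₃ Γ 0 (wdelta F l₁ l₂ l₃ Γ p) = pd F l₁ l₂ l₃ Γ p := by
  simp only [actW, wdelta, fcoord_zero, zero_smul, add_zero]
  rw [Finset.sum_eq_single p (fun q _ hq => by simp [Pi.single_eq_of_ne hq]) (by simp),
    Pi.single_eq_same, LinearMap.mulLeft_one, LinearMap.id_comp]

theorem pd_mono_zero (p : Fin (l₁ + l₂ + l₃)) (β : Γ) :
    pd F l₁ l₂ l₃ Γ p (mono F l₁ l₂ l₃ Γ β 0) =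
      acoord F l₁ l₂ l₃ Γ p β • mono F l₁ l₂ l₃ Γ β 0 := by
  simp [mono, pd_single]

theorem pd_mono_zero_single_mem_L0 (p : Fin (l₁ + l₂ + l₃)) (P : Fin (l₁ + l₂)) :
    pd F l₁ l₂ l₃ Γ p (mono F l₁ l₂ l₃ Γ 0 (Finsupp.single P 1)) ∈ L0 F l₁ l₂ l₃ Γ := by
  induction p using Fin.addCases with
  | left Q =>
    by_cases hQ : P = Q
    · subst hQ
      simp [mono, pd_single, L0]
    · simp [mono, pd_single, hQ]
  | right q => simp [mono, pd_single]

theorem L0_le_comap_pd (p : Fin (l₁ + l₂ + l₃)) :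
    L0 F l₁ l₂ l₃ Γ ≤ (L0 F l₁ l₂ l₃ Γ).comap (pd F l₁ l₂ l₃ Γ p) := by
  rw [L0, Submodule.span_le, Set.singleton_subset_iff]
  simp [pd_mono_zero]

variable (F l₁ l₂ l₃ Γ) in
noncomputable def pdQ (p : Fin (l₁ + l₂ + l₃)) :
    Module.End F (Alg F l₁ l₂ l₃ Γ ⧸ L0 F l₁ l₂ l₃ Γ) :=
  (L0 F l₁ l₂ l₃ Γ).mapQ (L0 F l₁ l₂ l₃ Γ) (pd F l₁ l₂ l₃ Γ p) (L0_le_comap_pd p)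

theorem mapQ_actW_zero_wdelta (p : Fin (l₁ + l₂ + l₃))
    (h : L0 F l₁ l₂ l₃ Γ ≤ (L0 F l₁ l₂ l₃ Γ).comap (actW F l₁ l₂ l₃ Γ 0 (wdelta F l₁ l₂ l₃ Γ p))) :
    (L0 F l₁ l₂ l₃ Γ).mapQ (L0 F l₁ l₂ l₃ Γ) (actW F l₁ l₂ l₃ Γ 0 (wdelta F l₁ l₂ l₃ Γ p)) h =
      pdQ F l₁ l₂ l₃ Γ p := by
  simp only [pdQ, actW_zero_wdelta]

theorem pdQ_mkQ (p : Fin (l₁ + l₂ + l₃)) (u : Alg F l₁ l₂ l₃ Γ) :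
    pdQ F l₁ l₂ l₃ Γ p ((L0 F l₁ l₂ l₃ Γ).mkQ u) = (L0 F l₁ l₂ l₃ Γ).mkQ (pd F l₁ l₂ l₃ Γ p u) :=
  rfl

theorem pdQ_mkQ_eq_smul_iff (p : Fin (l₁ + l₂ + l₃)) (c : F) (u : Alg F l₁ l₂ l₃ Γ) :
    pdQ F l₁ l₂ l₃ Γ p ((L0 F l₁ l₂ l₃ Γ).mkQ u) = c • (L0 F l₁ l₂ l₃ Γ).mkQ u ↔
      pd F l₁ l₂ l₃ Γ p u - c • u ∈ L0 F l₁ l₂ l₃ Γ := by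
  rw [pdQ_mkQ, ← map_smul, Submodule.mkQ_apply, Submodule.mkQ_apply, Submodule.Quotient.eq]

theorem linearIndependent_mkQ_mono :
    LinearIndependent F fun g : {g : Γ × (Fin (l₁ + l₂) →₀ ℕ) // g ≠ 0} =>
      (L0 F l₁ l₂ l₃ Γ).mkQ (mono F l₁ l₂ l₃ Γ g.1.1 g.1.2) := by
  have hli := (AddMonoidAlgebra.basis (Γ × (Fin (l₁ + l₂) →₀ ℕ)) F).linearIndependent
  refine (hli.comp Subtype.val Subtype.val_injective).map ?_
  have hdisj := hli.disjoint_span_image (s := {g | g ≠ 0}) (t := {0}) (by simp)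
  rw [Submodule.ker_mkQ, Set.range_comp, Subtype.range_coe_subtype]
  rwa [Set.image_singleton] at hdisj

theorem mkQ_mono_ne_zero {α : Γ} {i : Fin (l₁ + l₂) →₀ ℕ} (h : (α, i) ≠ 0) :
    (L0 F l₁ l₂ l₃ Γ).mkQ (mono F l₁ l₂ l₃ Γ α i) ≠ 0 :=
  linearIndependent_mkQ_mono.ne_zero ⟨(α, i), h⟩

theorem mkQ_mem_span_image_mkQ_mono {u : Alg F l₁ l₂ l₃ Γ} {s : Set (Γ × (Fin (l₁ + l₂) →₀ ℕ))}
    (hu : ∀ g ≠ 0, u.coeff g ≠ 0 → g ∈ s) :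
    (L0 F l₁ l₂ l₃ Γ).mkQ u ∈
      Submodule.span F ((fun g => (L0 F l₁ l₂ l₃ Γ).mkQ (mono F l₁ l₂ l₃ Γ g.1 g.2)) '' s) := by
  have hsupp : u ∈ AddMonoidAlgebra.supported F F (insert 0 s) :=
    AddMonoidAlgebra.mem_supported'.2 fun g hg => by
      by_contra hne
      exact hg (Or.inr (hu g (fun h => hg (Or.inl h)) hne))
  rw [AddMonoidAlgebra.supported_eq_span_single] at hsupp
  have hmap := Submodule.mem_map_of_mem (f := (L0 F l₁ l₂ l₃ Γ).mkQ) hsupp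
  rw [Submodule.map_span, ← Set.image_comp, Set.image_insert_eq] at hmap
  have hzero : (L0 F l₁ l₂ l₃ Γ).mkQ (AddMonoidAlgebra.single 0 1) = 0 :=
    (Submodule.Quotient.mk_eq_zero _).2 (Submodule.subset_span rfl)
  rwa [Function.comp_apply, hzero, Submodule.span_insert_zero] at hmap

theorem exists_ne_zero_forall_pdQ_sub_smul_pow_eq_zero_iff (h : 0 < l₁ + l₂)
    (β : Fin (l₂ + l₃) → F) :
    (∃ w, w ≠ 0 ∧ ∀ p, ∃ n : ℕ, ((pdQ F l₁ l₂ l₃ Γ p - fcoord F l₁ l₂ l₃ p β • 1) ^ n) w = 0) ↔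
      β ∈ Γ := by
  constructor
  · rintro ⟨w, hw, hpow⟩
    obtain ⟨u, rfl⟩ := Submodule.mkQ_surjective _ w
    refine mem_of_forall_pd_sub_smul_pow_mem_L0 (u := u) (fun hu => hw ?_) fun p => ?_
    · exact (Submodule.Quotient.mk_eq_zero _).2 hu
    · obtain ⟨n, hn⟩ := hpow p
      exact ⟨n, (Submodule.Quotient.mk_eq_zero _).1 <|
        (Submodule.mapQ_sub_smul_pow_mkQ _ _ _ _ n u).symm.trans hn⟩
  · intro hβ
    obtain ⟨w, hw, hβw⟩ : ∃ w, w ≠ 0 ∧ ∀ p, pdQ F l₁ l₂ l₃ Γ p w = fcoord F l₁ l₂ l₃ p β • w := by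
      by_cases hβ0 : β = 0
      · subst hβ0
        refine ⟨_, mkQ_mono_ne_zero (α := 0) (i := Finsupp.single ⟨0, h⟩ 1) (by simp), fun p => ?_⟩
        rw [fcoord_zero, zero_smul]
        exact (Submodule.Quotient.mk_eq_zero _).2 (pd_mono_zero_single_mem_L0 p _)
      · refine ⟨_, mkQ_mono_ne_zero (α := ⟨β, hβ⟩) (i := 0) (by simpa using hβ0), fun p => ?_⟩
        rw [pdQ_mkQ, pd_mono_zero, map_smul, acoord_eq_fcoord]
    exact ⟨w, hw, fun p => ⟨1, by simp [hβw]⟩⟩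

theorem span_setOf_pdQ_eq_zero [CharZero F] :
    Submodule.span F {w | ∀ p, pdQ F l₁ l₂ l₃ Γ p w = 0} =
      Submodule.span F (Set.range fun P : Fin (l₁ + l₂) =>
        (L0 F l₁ l₂ l₃ Γ).mkQ (mono F l₁ l₂ l₃ Γ 0 (Finsupp.single P 1))) := by
  refine le_antisymm (Submodule.span_le.2 fun w hw => ?_)
    (Submodule.span_mono fun _ ⟨P, hP⟩ p => hP ▸ ?_)
  · obtain ⟨u, rfl⟩ := Submodule.mkQ_surjective _ w
    have hu : ∀ p, pd F l₁ l₂ l₃ Γ p u - acoord F l₁ l₂ l₃ Γ p 0 • u ∈ L0 F l₁ l₂ l₃ Γ :=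
      fun p => (pdQ_mkQ_eq_smul_iff p _ u).1 (by rw [hw p, acoord_zero, zero_smul])
    have hspan := mkQ_mem_span_image_mkQ_mono (u := u)
      (s := Set.range fun P => ((0 : Γ), Finsupp.single P 1)) fun ⟨α, i⟩ hg hne => by
        obtain ⟨rfl, rfl | ⟨-, P, rfl⟩⟩ := support_of_forall_pd_sub_smul_mem_L0 hu hg hne
        · exact absurd rfl hg
        · exact ⟨P, rfl⟩
    rwa [← Set.range_comp] at hspan
  · exact (Submodule.Quotient.mk_eq_zero _).2 (pd_mono_zero_single_mem_L0 p P)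

theorem span_setOf_pdQ_eq_smul [CharZero F] {β : Γ} (hβ : β ≠ 0) :
    Submodule.span F {w | ∀ p, pdQ F l₁ l₂ l₃ Γ p w = acoord F l₁ l₂ l₃ Γ p β • w} =
      Submodule.span F {(L0 F l₁ l₂ l₃ Γ).mkQ (mono F l₁ l₂ l₃ Γ β 0)} := by
  refine le_antisymm (Submodule.span_le.2 fun w hw => ?_)
    (Submodule.span_mono (Set.singleton_subset_iff.2 fun p => ?_))
  · obtain ⟨u, rfl⟩ := Submodule.mkQ_surjective _ w
    have hspan := mkQ_mem_span_image_mkQ_mono (u := u) (s := {(β, 0)}) fun ⟨α, i⟩ hg hne => by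
      obtain ⟨rfl, rfl | ⟨rfl, -⟩⟩ :=
        support_of_forall_pd_sub_smul_mem_L0 (fun p => (pdQ_mkQ_eq_smul_iff p _ u).1 (hw p)) hg hne
      · rfl
      · exact absurd rfl hβ
    rwa [Set.image_singleton] at hspan
  · rw [pdQ_mkQ, pd_mono_zero, map_smul]

theorem linearIndependent_mkQ_mono_zero_single :
    LinearIndependent F fun P : Fin (l₁ + l₂) =>
      (L0 F l₁ l₂ l₃ Γ).mkQ (mono F l₁ l₂ l₃ Γ 0 (Finsupp.single P 1)) :=
  linearIndependent_mkQ_mono.comp (fun P => ⟨(0, Finsupp.single P 1), by simp⟩)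
    fun _ _ h => Finsupp.single_left_injective one_ne_zero (congrArg (·.1.2) h)

theorem rank_span_range_mkQ_mono_zero_single :
    Module.rank F (Submodule.span F (Set.range fun P : Fin (l₁ + l₂) =>
      (L0 F l₁ l₂ l₃ Γ).mkQ (mono F l₁ l₂ l₃ Γ 0 (Finsupp.single P 1)))) = l₁ + l₂ := by
  rw [rank_span linearIndependent_mkQ_mono_zero_single,
    Cardinal.mk_range_eq _ linearIndependent_mkQ_mono_zero_single.injective, Cardinal.mk_fin,
    Nat.cast_add]

theorem rank_span_singleton_mkQ_mono_zero {β : Γ} (hβ : β ≠ 0) :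
    Module.rank F (Submodule.span F {(L0 F l₁ l₂ l₃ Γ).mkQ (mono F l₁ l₂ l₃ Γ β 0)}) = 1 := by
  rw [← Module.finrank_eq_rank, finrank_span_singleton (mkQ_mono_ne_zero (by simpa using hβ)),
    Nat.cast_one]

end SDF

namespace SDF

variable (F : Type) [Field F] [IsAlgClosed F] [CharZero F]
variable (l₁ l₂ l₃ : ℕ) (Γ : AddSubgroup (Fin (l₂ + l₃) → F))

theorem stmt18
    (h12 : 3 ≤ l₁ + l₂)
    (hmap : ∀ p : Fin (l₁ + l₂ + l₃),
      L0 F l₁ l₂ l₃ Γ ≤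
        (L0 F l₁ l₂ l₃ Γ).comap (actW F l₁ l₂ l₃ Γ 0 (wdelta F l₁ l₂ l₃ Γ p))) :
    (∀ β : Fin (l₂ + l₃) → F,
        (∃ w : Alg F l₁ l₂ l₃ Γ ⧸ L0 F l₁ l₂ l₃ Γ, w ≠ 0 ∧
          ∀ p : Fin (l₁ + l₂ + l₃), ∃ n : ℕ,
            ((Submodule.mapQ (L0 F l₁ l₂ l₃ Γ) (L0 F l₁ l₂ l₃ Γ)
                  (actW F l₁ l₂ l₃ Γ 0 (wdelta F l₁ l₂ l₃ Γ p)) (hmap p)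
                - fcoord F l₁ l₂ l₃ p β • 1 :
                Module.End F (Alg F l₁ l₂ l₃ Γ ⧸ L0 F l₁ l₂ l₃ Γ)) ^ n) w = 0) ↔
        β ∈ Γ) ∧
    Submodule.span F
        {w : Alg F l₁ l₂ l₃ Γ ⧸ L0 F l₁ l₂ l₃ Γ | ∀ p : Fin (l₁ + l₂ + l₃),
          Submodule.mapQ (L0 F l₁ l₂ l₃ Γ) (L0 F l₁ l₂ l₃ Γ)
              (actW F l₁ l₂ l₃ Γ 0 (wdelta F l₁ l₂ l₃ Γ p)) (hmap p) w = 0} =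
      Submodule.span F
        (Set.range fun p : Fin (l₁ + l₂) =>
          (L0 F l₁ l₂ l₃ Γ).mkQ (mono F l₁ l₂ l₃ Γ 0 (Finsupp.single p 1))) ∧
    Module.rank F
        ↥(Submodule.span F
          {w : Alg F l₁ l₂ l₃ Γ ⧸ L0 F l₁ l₂ l₃ Γ | ∀ p : Fin (l₁ + l₂ + l₃),
            Submodule.mapQ (L0 F l₁ l₂ l₃ Γ) (L0 F l₁ l₂ l₃ Γ)
                (actW F l₁ l₂ l₃ Γ 0 (wdelta F l₁ l₂ l₃ Γ p)) (hmap p) w = 0}) =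
      (l₁ + l₂ : Cardinal) ∧
    ∀ β : Γ, β ≠ 0 →
      Module.rank F
          ↥(Submodule.span F
            {w : Alg F l₁ l₂ l₃ Γ ⧸ L0 F l₁ l₂ l₃ Γ | ∀ p : Fin (l₁ + l₂ + l₃),
              Submodule.mapQ (L0 F l₁ l₂ l₃ Γ) (L0 F l₁ l₂ l₃ Γ)
                  (actW F l₁ l₂ l₃ Γ 0 (wdelta F l₁ l₂ l₃ Γ p)) (hmap p) w =
                acoord F l₁ l₂ l₃ Γ p β • w}) = 1 := by
  simp only [mapQ_actW_zero_wdelta]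
  refine ⟨exists_ne_zero_forall_pdQ_sub_smul_pow_eq_zero_iff (by omega), span_setOf_pdQ_eq_zero,
    ?_, fun β hβ => ?_⟩
  -- the instances of `Module.rank` depend on the submodule, so `simp` cannot rewrite the span there
  · refine (LinearEquiv.ofEq _ _ ?_).rank_eq.trans rank_span_range_mkQ_mono_zero_single
    simpa only [mapQ_actW_zero_wdelta] using span_setOf_pdQ_eq_zero
  · refine (LinearEquiv.ofEq _ _ ?_).rank_eq.trans (rank_span_singleton_mkQ_mono_zero hβ)
    simpa only [mapQ_actW_zero_wdelta] using span_setOf_pdQ_eq_smul hβ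

end SDF
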